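/- The reversion of g_{α,β} is the rational series 1/(1 + αx + βx²): if g satisfies g = 1/(1 − αx − βx²g) with g(0)=1, then the compositional inverse of x·g(x) is x/(1 + αx + βx²). -/

import Mathlib

open PowerSeries

/-- Composition (substitution) of formal power series, meaningful when the
second argument has zero constant term. -/
noncomputable def psComp {K : Type*} [Field K] (f g : K⟦X⟧) : K⟦X⟧ :=
  PowerSeries.mk fun n => ∑ k ∈ Finset.range (n + 1), coeff k f * coeff n (g ^ k)

/-- The `s`-INVERT transform: `g(x) ↦ g(x)/(1 - s·x·g(x))`. -/
noncomputable def invertT {K : Type*} [Field K] (s : K) (g : K⟦X⟧) : K⟦X⟧ :=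
  g * (1 - C s * X * g)⁻¹

/-- The mean-INVERT transform: `g(x) ↦ g(x)/(1 - r·x²·g(x)²)`. -/
noncomputable def minvertT {K : Type*} [Field K] (r : K) (g : K⟦X⟧) : K⟦X⟧ :=
  g * (1 - C r * X ^ 2 * g ^ 2)⁻¹

/-!
Write `u = X / (1 + αX + βX²)` and `G = g ∘ u`. Substituting `u` into the functional equation
gives `G (1 - αu - βu²G) = 1`, and combining it with `u (1 + αX + βX²) = X` yields
`(uG - X)(1 - u(α + β(uG + X))) = 0`. The second factor has constant term `1`, hence is a unit,
so `(X g) ∘ u = uG = X`.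
-/

namespace PowerSeries

theorem coeff_pow_eq_zero_of_lt {R : Type*} [CommRing R] {u : R⟦X⟧}
    (hu : constantCoeff u = 0) {n k : ℕ} (h : n < k) : coeff n (u ^ k) = 0 :=
  X_pow_dvd_iff.mp (pow_dvd_pow_of_dvd (X_dvd_iff.mpr hu) k) n h

theorem mul_eq_X_of_mul_one_sub_eq_one {R : Type*} [CommRing R] {a b u G : R⟦X⟧}
    (hu : constantCoeff u = 0) (hG : G * (1 - a * u - b * u ^ 2 * G) = 1)
    (hux : u * (1 + a * X + b * X ^ 2) = X) : u * G = X := by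
  have hunit : IsUnit (1 - u * (a + b * (u * G + X))) := by
    simp [isUnit_iff_constantCoeff, hu]
  have hprod : (u * G - X) * (1 - u * (a + b * (u * G + X))) = 0 := by
    linear_combination u * hG + hux
  exact sub_eq_zero.mp (hunit.mul_left_eq_zero.mp hprod)

end PowerSeries

theorem psComp_eq_subst {K : Type*} [Field K] {u : K⟦X⟧} (hu : constantCoeff u = 0)
    (f : K⟦X⟧) : psComp f u = f.subst u := by
  ext n
  rw [psComp, coeff_mk, coeff_subst' (HasSubst.of_constantCoeff_zero' hu),
    finsum_eq_sum_of_support_subset _ (s := Finset.range (n + 1))]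
  · simp only [smul_eq_mul]
  · intro k hk
    rw [Function.mem_support] at hk
    rw [Finset.coe_range, Set.mem_Iio]
    by_contra! hnk
    exact hk (by rw [coeff_pow_eq_zero_of_lt hu (by omega), smul_zero])

theorem rev_jacobi_constant_general {K : Type*} [Field K] (α β : K) (g : K⟦X⟧)
    (hg : g * (1 - C α * X - C β * X ^ 2 * g) = 1) :
    psComp (X * g) (X * (1 + C α * X + C β * X ^ 2)⁻¹) = X := by
  set u : K⟦X⟧ := X * (1 + C α * X + C β * X ^ 2)⁻¹
  have hu : constantCoeff u = 0 := by simp [u]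
  have hux : u * (1 + C α * X + C β * X ^ 2) = X := by
    rw [mul_assoc, PowerSeries.inv_mul_cancel _ (by simp), mul_one]
  have hsubst := HasSubst.of_constantCoeff_zero' hu
  have hgu : g.subst u * (1 - C α * u - C β * u ^ 2 * g.subst u) = 1 := by
    simpa [← coe_substAlgHom hsubst, substAlgHom_X, ← algebraMap_eq] using
      congrArg (substAlgHom (R := K) hsubst) hg
  rw [psComp_eq_subst hu, subst_mul hsubst, subst_X hsubst]
  exact mul_eq_X_of_mul_one_sub_eq_one hu hgu hux

theorem rev_jacobi_constant {K : Type*} [Field K] [CharZero K] (α β : K) (g : K⟦X⟧)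
    (hg0 : constantCoeff g = 1)
    (hg : g * (1 - C α * X - C β * X ^ 2 * g) = 1) :
    psComp (X * g) (X * (1 + C α * X + C β * X ^ 2)⁻¹) = X :=
  rev_jacobi_constant_general α β g hg
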